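/- In an undirected graph G with source s and sink t in which every edge lies on some s-t path, every tracking set T is a feedback vertex set of G. -/

import Mathlib

/-
If a cycle `C` avoided `T`, take an `s`-`t` path through an edge of `C`. Let `u` and `w` be the first
and last vertices of `C` on it. Replacing the stretch between `u` and `w` by either of the two arcs
of `C` from `u` to `w` gives two distinct `s`-`t` paths, which differ only inside `C`, hence have
the same sequence of `T`-vertices.
-/

open SimpleGraph

noncomputable def trackSeq {V : Type} (T : Set V) (l : List V) : List V :=
  l.filter (fun v => @decide (v ∈ T) (Classical.propDecidable _))

/-- `T` is a tracking set for `s`-`t` paths in `G`: distinct `s`-`t` paths have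
distinct sequences of `T`-vertices along them. -/
def IsTrackingSet {V : Type} (G : SimpleGraph V) (s t : V) (T : Set V) : Prop :=
  ∀ p q : G.Walk s t, p.IsPath → q.IsPath →
    trackSeq T p.support = trackSeq T q.support → p = q

/-- Every vertex and every edge of `G` lies on some `s`-`t` path. -/
def Reduced {V : Type} (G : SimpleGraph V) (s t : V) : Prop :=
  (∀ v : V, ∃ p : G.Walk s t, p.IsPath ∧ v ∈ p.support) ∧
  (∀ e ∈ G.edgeSet, ∃ p : G.Walk s t, p.IsPath ∧ e ∈ p.edges)

/-- `S` is a feedback vertex set: every cycle of `G` meets `S`. -/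
def IsFVS {V : Type} (G : SimpleGraph V) (S : Set V) : Prop :=
  ∀ (v : V) (c : G.Walk v v), c.IsCycle → ∃ x ∈ c.support, x ∈ S

/-- The neighbourhood of a set of vertices. -/
def nbhd {V : Type} (G : SimpleGraph V) (S : Set V) : Set V :=
  {v | ∃ u ∈ S, G.Adj u v}

namespace SimpleGraph.Walk

variable {V : Type} {G : SimpleGraph V}

lemma append_right_injective {u v w : V} (p : G.Walk u v) :
    Function.Injective (p.append : G.Walk v w → G.Walk u w) := fun q r h =>
  edges_injective <| List.append_cancel_left <| by simpa only [edges_append] using congrArg edges h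

lemma append_left_injective {u v w : V} (q : G.Walk v w) :
    Function.Injective (fun p : G.Walk u v => p.append q) := fun p r h =>
  edges_injective <| List.append_cancel_right <| by
    simpa only [edges_append] using congrArg edges h

lemma exists_eq_append_first_visit (S : Set V) {a b : V} (p : G.Walk a b)
    (h : ∃ x ∈ p.support, x ∈ S) :
    ∃ (u : V) (p₁ : G.Walk a u) (p₂ : G.Walk u b),
      p = p₁.append p₂ ∧ u ∈ S ∧ ∀ x ∈ p₁.support, x ∈ S → x = u := by
  induction p with
  | nil => exact ⟨_, nil, nil, rfl, by simpa using h, by simp⟩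
  | @cons a _ _ hadj q ih =>
    by_cases ha : a ∈ S
    · exact ⟨a, nil, cons hadj q, rfl, ha, by simp⟩
    obtain ⟨u, p₁, p₂, rfl, huS, hp₁⟩ := ih (by simpa [ha] using h)
    exact ⟨u, cons hadj p₁, p₂, rfl, huS, by simpa [ha] using hp₁⟩

lemma exists_eq_append_last_visit (S : Set V) {a b : V} (p : G.Walk a b)
    (h : ∃ x ∈ p.support, x ∈ S) :
    ∃ (w : V) (p₁ : G.Walk a w) (p₂ : G.Walk w b),
      p = p₁.append p₂ ∧ w ∈ S ∧ ∀ x ∈ p₂.support, x ∈ S → x = w := by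
  obtain ⟨w, q₁, q₂, hq, hwS, hq₁⟩ :=
    exists_eq_append_first_visit S p.reverse (by simpa only [support_reverse, List.mem_reverse])
  refine ⟨w, q₂.reverse, q₁.reverse, ?_, hwS, by simpa only [support_reverse, List.mem_reverse]⟩
  rw [← reverse_append, ← hq, reverse_reverse]

lemma IsPath.append_append_of_support_subset {S : Set V} {s u w t : V} {p₁ : G.Walk s u}
    {m A : G.Walk u w} {p₂ : G.Walk w t} (hp : (p₁.append (m.append p₂)).IsPath)
    (hA : A.IsPath) (hAS : ∀ z ∈ A.support, z ∈ S) (hp₁S : ∀ z ∈ p₁.support, z ∈ S → z = u)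
    (hp₂S : ∀ z ∈ p₂.support, z ∈ S → z = w) :
    (p₁.append (A.append p₂)).IsPath := by
  have hA' := hA.support_nodup
  have hp₂' := hp.of_append_right.of_append_right.support_nodup
  rw [← cons_tail_support, List.nodup_cons] at hA' hp₂'
  have hp' := hp.support_nodup
  rw [isPath_def]
  rw [support_append, tail_support_append, List.nodup_append, List.nodup_append] at hp' ⊢
  obtain ⟨hp₁, ⟨-, hp₂, -⟩, hp₁p₂⟩ := hp'
  refine ⟨hp₁, ⟨hA'.2, hp₂, ?_⟩, ?_⟩
  · rintro z hzA _ hz₂ rfl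
    exact hp₂'.1 (hp₂S z (List.mem_of_mem_tail hz₂) (hAS z (List.mem_of_mem_tail hzA)) ▸ hz₂)
  · rintro z hz₁ _ hz rfl
    rcases List.mem_append.1 hz with hzA | hz₂
    · exact hA'.1 (hp₁S z hz₁ (hAS z (List.mem_of_mem_tail hzA)) ▸ hzA)
    · exact hp₁p₂ z hz₁ z (List.mem_append_right _ hz₂) rfl

lemma IsPath.exists_reroute {S : Set V} {s t x y : V} {p : G.Walk s t} (hp : p.IsPath)
    (hx : x ∈ p.support) (hy : y ∈ p.support) (hxS : x ∈ S) (hyS : y ∈ S) (hxy : x ≠ y) :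
    ∃ (u w : V) (p₁ : G.Walk s u) (p₂ : G.Walk w t), u ≠ w ∧ u ∈ S ∧ w ∈ S ∧
      ∀ A : G.Walk u w, A.IsPath → (∀ z ∈ A.support, z ∈ S) →
        (p₁.append (A.append p₂)).IsPath := by
  obtain ⟨u, p₁, r, rfl, huS, hp₁S⟩ := exists_eq_append_first_visit S p ⟨x, hx, hxS⟩
  obtain ⟨w, m, p₂, rfl, hwS, hp₂S⟩ :=
    exists_eq_append_last_visit S r ⟨u, r.start_mem_support, huS⟩
  refine ⟨u, w, p₁, p₂, ?_, huS, hwS,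
    fun A hA hAS => hp.append_append_of_support_subset hA hAS hp₁S hp₂S⟩
  rintro rfl
  obtain rfl : m = Walk.nil := (isPath_iff_nil.mp hp.of_append_right.of_append_left).eq_nil
  rw [nil_append, mem_support_append_iff] at hx hy
  have hS : ∀ z, z ∈ p₁.support ∨ z ∈ p₂.support → z ∈ S → z = u := fun z hz hzS =>
    hz.elim (hp₁S z · hzS) (hp₂S z · hzS)
  exact hxy ((hS x hx hxS).trans (hS y hy hyS).symm)

lemma IsCycle.exists_isPath_ne {v u w : V} {c : G.Walk v v} (hc : c.IsCycle)
    (hu : u ∈ c.support) (hw : w ∈ c.support) (huw : u ≠ w) :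
    ∃ A₁ A₂ : G.Walk u w, A₁.IsPath ∧ A₂.IsPath ∧ A₁ ≠ A₂ ∧
      A₁.support ⊆ c.support ∧ A₂.support ⊆ c.support := by
  classical
  set c' := c.rotate u hu
  have hc' : c'.IsCycle := hc.rotate hu
  have hw' : w ∈ c'.support := (c.mem_support_rotate_iff u hu).2 hw
  have hspec := c'.take_spec hw'
  have hdrop : (c'.dropUntil w hw').IsPath :=
    IsCycle.isPath_of_append_right (not_nil_of_ne huw) (hspec ▸ hc')
  refine ⟨c'.takeUntil w hw', (c'.dropUntil w hw').reverse, hc'.isPath_takeUntil hw',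
    hdrop.reverse, ?_,
    fun z hz => (c.mem_support_rotate_iff u hu).1 (c'.support_takeUntil_subset_support hw' hz),
    fun z hz => (c.mem_support_rotate_iff u hu).1
      (c'.support_dropUntil_subset_support hw' (by simpa using hz))⟩
  -- if the two arcs coincide, the cycle runs through the edges of the arc twice
  intro h
  have hnodup := hc'.edges_nodup
  rw [← hspec, edges_append, ← reverse_reverse (c'.dropUntil w hw'), ← h, edges_reverse] at hnodup
  obtain ⟨e, he⟩ := List.exists_mem_of_ne_nil _ (edges_eq_nil.not.2 (not_nil_of_ne huw))
  exact List.disjoint_of_nodup_append hnodup he (List.mem_reverse.2 he)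

end SimpleGraph.Walk

lemma trackSeq_append {V : Type} (T : Set V) (l₁ l₂ : List V) :
    trackSeq T (l₁ ++ l₂) = trackSeq T l₁ ++ trackSeq T l₂ :=
  List.filter_append ..

open SimpleGraph.Walk in
lemma trackSeq_support_append_append {V : Type} {G : SimpleGraph V} (T : Set V) {s u w t : V}
    (p₁ : G.Walk s u) {A : G.Walk u w} (p₂ : G.Walk w t) (hA : ∀ z ∈ A.support, z ∉ T) :
    trackSeq T (p₁.append (A.append p₂)).support
      = trackSeq T p₁.support ++ trackSeq T p₂.support.tail := by
  have hAT : trackSeq T A.support.tail = [] :=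
    List.filter_eq_nil_iff.2 fun z hz => by simpa using hA z (List.mem_of_mem_tail hz)
  rw [support_append, tail_support_append, trackSeq_append, trackSeq_append, hAT, List.nil_append]

theorem stmt18_general {V : Type} (G : SimpleGraph V) (s t : V)
    (hred : ∀ e ∈ G.edgeSet, ∃ p : G.Walk s t, p.IsPath ∧ e ∈ p.edges)
    (T : Set V) (hT : IsTrackingSet G s t T) :
    IsFVS G T := by
  intro v c hc
  by_contra! hcT
  have hadj := c.adj_snd hc.not_nil
  obtain ⟨p, hp, hvp⟩ := hred s(v, c.snd) hadj
  obtain ⟨u, w, p₁, p₂, huw, hu, hw, hreroute⟩ := hp.exists_reroute (S := {z | z ∈ c.support})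
    (p.fst_mem_support_of_mem_edges hvp) (p.snd_mem_support_of_mem_edges hvp)
    c.start_mem_support (List.mem_of_mem_tail (c.snd_mem_tail_support hc.not_nil)) hadj.ne
  obtain ⟨A₁, A₂, hA₁, hA₂, hne, hA₁c, hA₂c⟩ := hc.exists_isPath_ne hu hw huw
  refine hne (Walk.append_left_injective p₂ (Walk.append_right_injective p₁
    (hT _ _ (hreroute A₁ hA₁ hA₁c) (hreroute A₂ hA₂ hA₂c) ?_)))
  rw [trackSeq_support_append_append T p₁ p₂ fun z hz => hcT z (hA₁c hz),
    trackSeq_support_append_append T p₁ p₂ fun z hz => hcT z (hA₂c hz)]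

theorem stmt18 {V : Type} [Fintype V] (G : SimpleGraph V) (s t : V)
    (hred : ∀ e ∈ G.edgeSet, ∃ p : G.Walk s t, p.IsPath ∧ e ∈ p.edges)
    (T : Set V) (hT : IsTrackingSet G s t T) :
    IsFVS G T :=
  stmt18_general G s t hred T hT
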